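/- In the Artin group A[F₄] with standard generators s₁,s₂,s₃,s₄, the element α = s₁s₂⁻¹ satisfies the identity α·(βαβ⁻¹)·(β²αβ⁻²) = 1, where β = s₁s₂; in particular α is a generalized torsion element of the subgroup normally generated by elements mapping to the identity under any homomorphism killing α and β. -/

import Mathlib

namespace Stmt1

open FreeGroup

/-- Defining relators of the Artin group of type `F₄`, with generators
`s₁ = of 0`, `s₂ = of 1`, `s₃ = of 2`, `s₄ = of 3`. -/
def F4Rels : Set (FreeGroup (Fin 4)) :=
  { of 0 * of 1 * of 0 * (of 1 * of 0 * of 1)⁻¹,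
    of 1 * of 2 * of 1 * of 2 * (of 2 * of 1 * of 2 * of 1)⁻¹,
    of 2 * of 3 * of 2 * (of 3 * of 2 * of 3)⁻¹,
    of 0 * of 2 * (of 2 * of 0)⁻¹,
    of 0 * of 3 * (of 3 * of 0)⁻¹,
    of 1 * of 3 * (of 3 * of 1)⁻¹ }

/-- The Artin group of type `F₄`. -/
def ArtinF4 : Type := PresentedGroup F4Rels

instance : Group ArtinF4 := by unfold ArtinF4; infer_instance

/-- The standard generators of `A[F₄]`. -/
def s (i : Fin 4) : ArtinF4 := PresentedGroup.of i

/-!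
With `α = ab⁻¹` and `β = ab`, the product `α · βαβ⁻¹ · β²αβ⁻²` telescopes to `(αβ)³β⁻³`.
The braid relation `aba = bab` gives `b⁻¹ab = aba⁻¹`, so `αβ = a(ab)a⁻¹`, and `(ab)³ = (aba)²`
is central in the subgroup generated by `a` and `b`, because conjugation by `aba` swaps `a`
and `b`. Hence `(αβ)³ = β³`.
-/

section Braid

variable {G : Type*} [Group G]

theorem prod_ofFn_pow_mul_mul_pow_inv (x y : G) (n : ℕ) :
    (List.ofFn fun i : Fin n => y ^ (i : ℕ) * x * (y ^ (i : ℕ))⁻¹).prod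
      = (x * y) ^ n * (y ^ n)⁻¹ := by
  induction n with
  | zero => simp
  | succ n ih =>
    rw [List.ofFn_succ', List.prod_concat]
    simp only [Fin.val_castSucc, Fin.val_last, ih]
    simp only [pow_succ, mul_inv_rev, mul_assoc, inv_mul_cancel_left, mul_inv_cancel_left]

variable {a b : G}

theorem commute_mul_pow_three_of_braid (h : a * b * a = b * a * b) :
    Commute a ((a * b) ^ 3) := by
  have hcube : (a * b) ^ 3 = (a * b * a) * (a * b * a) :=
    calc (a * b) ^ 3 = (a * b * a) * (b * a * b) := by simp only [pow_three, mul_assoc]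
      _ = (a * b * a) * (a * b * a) := by rw [← h]
  have hswap_b : SemiconjBy (a * b * a) b a :=
    calc (a * b * a) * b = a * (b * a * b) := by group
      _ = a * (a * b * a) := by rw [h]
  have hswap_a : SemiconjBy (a * b * a) a b :=
    calc (a * b * a) * a = (b * a * b) * a := by rw [h]
      _ = b * (a * b * a) := by group
  rw [hcube]
  exact (hswap_b.mul_left hswap_a).symm

theorem mul_inv_mul_mul_eq_conj_of_braid (h : a * b * a = b * a * b) :
    a * b⁻¹ * (a * b) = a * (a * b) * a⁻¹ :=
  calc a * b⁻¹ * (a * b) = a * b⁻¹ * (a * b * a) * a⁻¹ := by group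
    _ = a * b⁻¹ * (b * a * b) * a⁻¹ := by rw [h]
    _ = a * (a * b) * a⁻¹ := by group

theorem mul_inv_mul_mul_pow_three_of_braid (h : a * b * a = b * a * b) :
    (a * b⁻¹ * (a * b)) ^ 3 = (a * b) ^ 3 := by
  rw [mul_inv_mul_mul_eq_conj_of_braid h, conj_pow,
    (commute_mul_pow_three_of_braid h).mul_inv_cancel]

end Braid

theorem s_zero_mul_s_one_mul_s_zero : s 0 * s 1 * s 0 = s 1 * s 0 * s 1 := by
  have hrel : of 0 * of 1 * of 0 * (of 1 * of 0 * of 1)⁻¹ ∈ Subgroup.normalClosure F4Rels :=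
    Subgroup.subset_normalClosure (Set.mem_insert _ _)
  exact mul_inv_eq_one.mp ((QuotientGroup.eq_one_iff _).mpr hrel)

/-- In `A[F₄]`, with `α = s₁s₂⁻¹` and `β = s₁s₂`, we have
`α·(βαβ⁻¹)·(β²αβ⁻²) = 1`; in particular, in any normal subgroup `N`
containing `α` and `β` (e.g. the kernel of any homomorphism killing `α` and
`β`), the element `α` is a generalized torsion element of `N`. -/
theorem generalized_torsion_in_F4 :
    (s 0 * (s 1)⁻¹) * ((s 0 * s 1) * (s 0 * (s 1)⁻¹) * (s 0 * s 1)⁻¹) *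
      ((s 0 * s 1) ^ 2 * (s 0 * (s 1)⁻¹) * ((s 0 * s 1) ^ 2)⁻¹) = 1 ∧
    ∀ (N : Subgroup ArtinF4), N.Normal → (s 0 * (s 1)⁻¹) ∈ N → (s 0 * s 1) ∈ N →
      ∃ (m : ℕ), 0 < m ∧ ∃ γ : Fin m → N,
        (List.ofFn (fun i => (γ i : ArtinF4) * (s 0 * (s 1)⁻¹) * ((γ i : ArtinF4))⁻¹)).prod
          = 1 := by
  have hprod : (List.ofFn fun i : Fin 3 =>
      (s 0 * s 1) ^ (i : ℕ) * (s 0 * (s 1)⁻¹) * ((s 0 * s 1) ^ (i : ℕ))⁻¹).prod = 1 := by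
    rw [prod_ofFn_pow_mul_mul_pow_inv,
      mul_inv_mul_mul_pow_three_of_braid s_zero_mul_s_one_mul_s_zero, mul_inv_cancel]
  refine ⟨?_, fun N _ _ hβ => ⟨3, three_pos, fun i => ⟨_, pow_mem hβ i⟩, hprod⟩⟩
  simpa [List.ofFn_succ, mul_assoc] using hprod

end Stmt1
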